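/- arXiv:0904.4347 — 3 statements merged into one kernel-verified Lean document; each statement's English description precedes it below -/
import Mathlib

section
/- Let (X,d) be a metric space with marked point a, and let r̃ = {r_n} and t̃ = {t_n} be normalizing sequences equivalent at a. Then at least one of the following holds: (i) there is a real number c > 0 with lim_{n→∞} r_n/t_n = c; (ii) both r̃ and t̃ are confluented at a (i.e., every sequence x̃ converging to a that is mutually stable with ã w.r.t. r̃ satisfies d̃_{r̃}(x̃,ã)=0, and likewise for t̃). -/
/-! The sequences `x` with `dist (x n) a / r n → L > 0` are what distinguishes a non-confluented
normalizing sequence. Equivalence at `a` transports such an `x` from `r` to `t` with a positive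
limit again: were the `t`-limit `0`, interleaving `x` with the constant sequence `ã` would give a
sequence mutually `t`-stable with `ã` whose `r`-ratios have the two limit points `L` and `0`.
The quotient of the two limits is then the limit of `r n / t n`. -/

open Filter Topology

/-- A normalizing sequence: positive reals tending to 0. -/
def Normalizing (r : ℕ → ℝ) : Prop :=
  (∀ n, 0 < r n) ∧ Tendsto r atTop (nhds 0)

/-- Two sequences in `X` are mutually stable w.r.t. `r`:
the limit of `dist (x n) (y n) / r n` exists and is finite. -/
def MutuallyStable {X : Type*} [MetricSpace X] (r : ℕ → ℝ) (x y : ℕ → X) : Prop :=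
  ∃ L : ℝ, Tendsto (fun n => dist (x n) (y n) / r n) atTop (nhds L)

/-- The normalized limit distance `d̃`. -/
noncomputable def dtilde {X : Type*} [MetricSpace X] (r : ℕ → ℝ) (x y : ℕ → X) : ℝ :=
  limUnder atTop (fun n => dist (x n) (y n) / r n)

/-- A family is self-stable if every two members are mutually stable. -/
def SelfStable {X : Type*} [MetricSpace X] (r : ℕ → ℝ) (F : Set (ℕ → X)) : Prop :=
  ∀ x ∈ F, ∀ y ∈ F, MutuallyStable r x y

/-- A family is maximal self-stable if it is self-stable and maximal with that property. -/
def MaximalSelfStable {X : Type*} [MetricSpace X] (r : ℕ → ℝ) (F : Set (ℕ → X)) : Prop :=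
  SelfStable r F ∧ ∀ G, SelfStable r G → F ⊆ G → G = F

/-- Two normalizing sequences are equivalent at `a`. -/
def EquivAt {X : Type*} [MetricSpace X] (a : X) (r t : ℕ → ℝ) : Prop :=
  ∀ F : Set (ℕ → X), (fun _ => a) ∈ F → (SelfStable r F ↔ SelfStable t F)

/-- A normalizing sequence is confluented at `a`: every sequence mutually stable with
the constant sequence `ã` has normalized distance 0 to it. -/
def Confluented {X : Type*} [MetricSpace X] (a : X) (r : ℕ → ℝ) : Prop :=
  ∀ x : ℕ → X, MutuallyStable r x (fun _ => a) →
    Tendsto (fun n => dist (x n) a / r n) atTop (nhds 0)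

section

variable {X : Type*} [MetricSpace X] {a : X} {r t : ℕ → ℝ}

lemma MutuallyStable.symm {x y : ℕ → X} (h : MutuallyStable r x y) : MutuallyStable r y x := by
  obtain ⟨L, hL⟩ := h
  exact ⟨L, by simpa only [dist_comm] using hL⟩

lemma mutuallyStable_self (x : ℕ → X) : MutuallyStable r x x :=
  ⟨0, by simpa only [dist_self, zero_div] using tendsto_const_nhds⟩

lemma selfStable_pair_iff {x y : ℕ → X} : SelfStable r {x, y} ↔ MutuallyStable r x y := by
  refine ⟨fun h => h x (by simp) y (by simp), fun h => ?_⟩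
  rintro u (rfl | rfl) v (rfl | rfl)
  exacts [mutuallyStable_self _, h, h.symm, mutuallyStable_self _]

lemma EquivAt.symm (h : EquivAt a r t) : EquivAt a t r := fun F hF => (h F hF).symm

lemma EquivAt.mutuallyStable_iff (h : EquivAt a r t) {x : ℕ → X} :
    MutuallyStable r x (fun _ => a) ↔ MutuallyStable t x (fun _ => a) := by
  simpa only [selfStable_pair_iff] using h {x, fun _ => a} (by simp)

lemma exists_tendsto_pos_of_not_confluented (hr : ∀ n, 0 ≤ r n) (hc : ¬Confluented a r) :
    ∃ (x : ℕ → X) (L : ℝ), 0 < L ∧ Tendsto (fun n => dist (x n) a / r n) atTop (𝓝 L) := by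
  simp only [Confluented, not_forall] at hc
  obtain ⟨x, ⟨L, hL⟩, hx⟩ := hc
  have hL0 : 0 ≤ L := ge_of_tendsto' hL fun n => div_nonneg dist_nonneg (hr n)
  exact ⟨x, L, hL0.lt_of_ne fun h => hx (h ▸ hL), hL⟩

lemma EquivAt.exists_tendsto_pos (h : EquivAt a r t) (ht : ∀ n, 0 ≤ t n) {x : ℕ → X} {L : ℝ}
    (hL : 0 < L) (hx : Tendsto (fun n => dist (x n) a / r n) atTop (𝓝 L)) :
    ∃ M, 0 < M ∧ Tendsto (fun n => dist (x n) a / t n) atTop (𝓝 M) := by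
  obtain ⟨M, hM⟩ := h.mutuallyStable_iff.mp ⟨L, hx⟩
  have hM0 : 0 ≤ M := ge_of_tendsto' hM fun n => div_nonneg dist_nonneg (ht n)
  refine ⟨M, hM0.lt_of_ne fun hM0 => ?_, hM⟩
  subst hM0
  set y : ℕ → X := fun n => if Even n then x n else a
  have hy_le : ∀ n, dist (y n) a ≤ dist (x n) a := fun n => by
    by_cases hn : Even n <;> simp [y, hn]
  have hyt : Tendsto (fun n => dist (y n) a / t n) atTop (𝓝 0) :=
    squeeze_zero (fun n => div_nonneg dist_nonneg (ht n))
      (fun n => div_le_div_of_nonneg_right (hy_le n) (ht n)) hM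
  obtain ⟨K, hK⟩ := h.mutuallyStable_iff.mpr ⟨0, hyt⟩
  have hK_even : K = L := by
    have heven := (strictMono_mul_left_of_pos (two_pos : (0 : ℕ) < 2)).tendsto_atTop
    refine tendsto_nhds_unique ((hK.comp heven).congr fun n => ?_) (hx.comp heven)
    simp [y]
  have hK_odd : K = 0 := by
    have hodd : StrictMono fun n : ℕ => 2 * n + 1 := fun m n hmn => by dsimp only; omega
    refine tendsto_nhds_unique ((hK.comp hodd.tendsto_atTop).congr fun n => ?_) tendsto_const_nhds
    simp [y]
  exact hL.ne' (hK_even ▸ hK_odd)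

lemma tendsto_div_of_tendsto_div_div {α : Type*} {l : Filter α} {f r t : α → ℝ} {P Q : ℝ}
    (hP : P ≠ 0) (hr : Tendsto (fun n => f n / r n) l (𝓝 P))
    (ht : Tendsto (fun n => f n / t n) l (𝓝 Q)) :
    Tendsto (fun n => r n / t n) l (𝓝 (Q / P)) := by
  refine (ht.div hr hP).congr' ?_
  filter_upwards [hr.eventually_ne hP] with n hn
  exact div_div_div_cancel_left' _ _ fun h0 => hn (by rw [h0, zero_div])

lemma EquivAt.exists_tendsto_div_of_not_confluented (h : EquivAt a r t) (hr : ∀ n, 0 ≤ r n)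
    (ht : ∀ n, 0 ≤ t n) (hc : ¬Confluented a r) :
    ∃ c, 0 < c ∧ Tendsto (fun n => r n / t n) atTop (𝓝 c) := by
  obtain ⟨x, L, hL, hx⟩ := exists_tendsto_pos_of_not_confluented hr hc
  obtain ⟨M, hM, hxt⟩ := h.exists_tendsto_pos ht hL hx
  exact ⟨M / L, div_pos hM hL, tendsto_div_of_tendsto_div_div hL.ne' hx hxt⟩

end

/-- If two normalizing sequences are equivalent at `a`, then either their ratio converges to
a positive constant, or both are confluented at `a`. -/
theorem stmt_5 {X : Type*} [MetricSpace X] (a : X) (r t : ℕ → ℝ)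
    (hr : Normalizing r) (ht : Normalizing t) (heq : EquivAt a r t) :
    (∃ c : ℝ, 0 < c ∧ Tendsto (fun n => r n / t n) atTop (nhds c)) ∨
      (Confluented a r ∧ Confluented a t) := by
  have hr0 : ∀ n, 0 ≤ r n := fun n => (hr.1 n).le
  have ht0 : ∀ n, 0 ≤ t n := fun n => (ht.1 n).le
  by_cases hcr : Confluented a r
  · by_cases hct : Confluented a t
    · exact Or.inr ⟨hcr, hct⟩
    obtain ⟨c, hc, hlim⟩ := heq.symm.exists_tendsto_div_of_not_confluented ht0 hr0 hct
    refine Or.inl ⟨c⁻¹, inv_pos.mpr hc, (hlim.inv₀ hc.ne').congr fun n => ?_⟩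
    exact inv_div _ _
  · exact Or.inl (heq.exists_tendsto_div_of_not_confluented hr0 ht0 hcr)
end

section
/- Let Y, Z be subspaces of a metric space (X,d), tangent equivalent at a ∈ Y ∩ Z w.r.t. r̃, let Z̃_{a,r̃} be maximal self-stable in Z̃ with pretangent space Ω^Z_{a,r̃}, and let Ω^Y_{a,r̃} be the pretangent space of Ỹ_{a,r̃} := [Z̃_{a,r̃}]_Y. Then the map Ω^Z_{a,r̃} ∋ α ↦ [α]_Y ∈ Ω^Y_{a,r̃} is an isometry (distance-preserving bijection). -/
open Filter Topology

/-- A sequence lies in the subspace `Y`. -/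
def InSubspace {X : Type*} (Y : Set X) (x : ℕ → X) : Prop := ∀ n, x n ∈ Y

/-- A family of sequences in the subspace `Y` that is self-stable and maximal among
self-stable families of sequences in `Y`. -/
def MaximalSelfStableIn {X : Type*} [MetricSpace X] (Y : Set X) (r : ℕ → ℝ)
    (F : Set (ℕ → X)) : Prop :=
  (∀ x ∈ F, InSubspace Y x) ∧ SelfStable r F ∧
    ∀ G, (∀ x ∈ G, InSubspace Y x) → SelfStable r G → F ⊆ G → G = F

/-- `[F]_Y`: all sequences in `Y` at normalized distance 0 from some member of `F`. -/
def bracket {X : Type*} [MetricSpace X] (Y : Set X) (r : ℕ → ℝ) (F : Set (ℕ → X)) :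
    Set (ℕ → X) :=
  {y | InSubspace Y y ∧ ∃ x ∈ F, Tendsto (fun n => dist (x n) (y n) / r n) atTop (nhds 0)}

/-- `Y` and `Z` are tangent equivalent at `a` w.r.t. `r`. -/
def TangentEquiv {X : Type*} [MetricSpace X] (Y Z : Set X) (a : X) (r : ℕ → ℝ) : Prop :=
  (∀ y : ℕ → X, InSubspace Y y → MutuallyStable r y (fun _ => a) →
    ∃ z : ℕ → X, InSubspace Z z ∧
      Tendsto (fun n => dist (y n) (z n) / r n) atTop (nhds 0)) ∧
  (∀ z : ℕ → X, InSubspace Z z → MutuallyStable r z (fun _ => a) →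
    ∃ y : ℕ → X, InSubspace Y y ∧
      Tendsto (fun n => dist (z n) (y n) / r n) atTop (nhds 0))

/-- `Y` and `Z` are strongly tangent equivalent at `a`. -/
def StronglyTangentEquiv {X : Type*} [MetricSpace X] (Y Z : Set X) (a : X) : Prop :=
  ∀ r : ℕ → ℝ, Normalizing r → TangentEquiv Y Z a r

/-- `ε_a(t, Z, Y) = sup_{z ∈ S^Z(a,t)} inf_{y ∈ Y} dist z y`
(here the first set argument is `Y`, the second is `Z`). -/
noncomputable def epsZY {X : Type*} [MetricSpace X] (Y Z : Set X) (a : X) (t : ℝ) : ℝ :=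
  sSup ((fun z => sInf ((fun y => dist z y) '' Y)) '' {z ∈ Z | dist a z = t})

lemma aux_transfer {X : Type*} [MetricSpace X] {r : ℕ → ℝ} (hr : ∀ n, 0 < r n)
    {z₁ z₂ y₁ y₂ : ℕ → X} {L : ℝ}
    (h1 : Tendsto (fun n => dist (z₁ n) (y₁ n) / r n) atTop (nhds 0))
    (h2 : Tendsto (fun n => dist (z₂ n) (y₂ n) / r n) atTop (nhds 0))
    (hL : Tendsto (fun n => dist (z₁ n) (z₂ n) / r n) atTop (nhds L)) :
    Tendsto (fun n => dist (y₁ n) (y₂ n) / r n) atTop (nhds L) := by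
  refine hL.congr_dist ?_
  have hb : ∀ n, dist (dist (z₁ n) (z₂ n) / r n) (dist (y₁ n) (y₂ n) / r n)
      ≤ dist (z₁ n) (y₁ n) / r n + dist (z₂ n) (y₂ n) / r n := by
    intro n
    rw [Real.dist_eq, div_sub_div_same, abs_div, abs_of_pos (hr n), ← add_div,
      div_le_div_iff_of_pos_right (hr n)]
    calc |dist (z₁ n) (z₂ n) - dist (y₁ n) (y₂ n)|
        ≤ |dist (z₁ n) (z₂ n) - dist (y₁ n) (z₂ n)|
          + |dist (y₁ n) (z₂ n) - dist (y₁ n) (y₂ n)| := by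
          exact abs_sub_le _ _ _
      _ ≤ dist (z₁ n) (y₁ n) + dist (z₂ n) (y₂ n) := by
          gcongr
          · exact abs_dist_sub_le _ _ _
          · rw [dist_comm (y₁ n) (z₂ n), dist_comm (y₁ n) (y₂ n)]
            exact abs_dist_sub_le _ _ _
  have h0 : Tendsto (fun n => dist (z₁ n) (y₁ n) / r n + dist (z₂ n) (y₂ n) / r n)
      atTop (nhds 0) := by simpa using h1.add h2
  exact squeeze_zero (fun n => dist_nonneg) hb h0

/-- The map `α ↦ [α]_Y` between the pretangent spaces of `Z̃_{a,r̃}` and of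
`Ỹ_{a,r̃} = [Z̃_{a,r̃}]_Y` is a distance-preserving bijection. -/
theorem stmt_15 {X : Type*} [MetricSpace X] (Y Z : Set X) (a : X)
    (haY : a ∈ Y) (haZ : a ∈ Z) (r : ℕ → ℝ) (hr : Normalizing r)
    (hYZ : TangentEquiv Y Z a r)
    (F : Set (ℕ → X)) (hF : MaximalSelfStableIn Z r F) (haF : (fun _ => a) ∈ F)
    {ΩZ ΩY : Type*}
    (pZ : {z : ℕ → X // z ∈ F} → ΩZ) (pY : {y : ℕ → X // y ∈ bracket Y r F} → ΩY)
    (hpZsurj : Function.Surjective pZ) (hpYsurj : Function.Surjective pY)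
    (hpZ : ∀ z₁ z₂, pZ z₁ = pZ z₂ ↔
      Tendsto (fun n => dist (z₁.1 n) (z₂.1 n) / r n) atTop (nhds 0))
    (hpY : ∀ y₁ y₂, pY y₁ = pY y₂ ↔
      Tendsto (fun n => dist (y₁.1 n) (y₂.1 n) / r n) atTop (nhds 0))
    (ρZ : ΩZ → ΩZ → ℝ) (ρY : ΩY → ΩY → ℝ)
    (hρZ : ∀ z₁ z₂, ρZ (pZ z₁) (pZ z₂) = dtilde r z₁.1 z₂.1)
    (hρY : ∀ y₁ y₂, ρY (pY y₁) (pY y₂) = dtilde r y₁.1 y₂.1) :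
    ∃ φ : ΩZ → ΩY,
      (∀ (z : {z : ℕ → X // z ∈ F}) (y : {y : ℕ → X // y ∈ bracket Y r F}),
        Tendsto (fun n => dist (z.1 n) (y.1 n) / r n) atTop (nhds 0) →
          φ (pZ z) = pY y) ∧
      Function.Bijective φ ∧
      (∀ α β : ΩZ, ρY (φ α) (φ β) = ρZ α β) := by
  have hrpos := hr.1
  have dsymm : ∀ x y : ℕ → X,
      Tendsto (fun n => dist (x n) (y n) / r n) atTop (nhds 0) →
      Tendsto (fun n => dist (y n) (x n) / r n) atTop (nhds 0) := by
    intro x y h; simpa [dist_comm] using h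
  -- choose y-partners for each z ∈ F
  have key : ∀ z : {z : ℕ → X // z ∈ F}, ∃ y : {y : ℕ → X // y ∈ bracket Y r F},
      Tendsto (fun n => dist (z.1 n) (y.1 n) / r n) atTop (nhds 0) := by
    intro z
    obtain ⟨y, hyY, hy0⟩ := hYZ.2 z.1 (hF.1 z.1 z.2) (hF.2.1 z.1 z.2 _ haF)
    exact ⟨⟨y, hyY, z.1, z.2, hy0⟩, hy0⟩
  choose ψ hψ using key
  choose s hs using hpZsurj
  refine ⟨fun α => pY (ψ (s α)), ?_, ?_, ?_⟩
  case refine_1 =>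
    intro z y hzy
    have hwz : Tendsto (fun n => dist ((s (pZ z)).1 n) (z.1 n) / r n) atTop (nhds 0) :=
      (hpZ (s (pZ z)) z).1 (hs (pZ z))
    exact (hpY _ _).2 (aux_transfer hrpos (hψ (s (pZ z))) hzy hwz)
  case refine_2 =>
    constructor
    · intro α β hαβ
      have h1 : Tendsto (fun n => dist ((ψ (s α)).1 n) ((ψ (s β)).1 n) / r n)
          atTop (nhds 0) := (hpY _ _).1 hαβ
      have h2 : Tendsto (fun n => dist ((s α).1 n) ((s β).1 n) / r n) atTop (nhds 0) :=
        aux_transfer hrpos (dsymm _ _ (hψ (s α))) (dsymm _ _ (hψ (s β))) h1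
      have := (hpZ (s α) (s β)).2 h2
      rwa [hs α, hs β] at this
    · intro β
      obtain ⟨y, rfl⟩ := hpYsurj β
      obtain ⟨hyY, z0, hz0F, h0⟩ := y.2
      refine ⟨pZ ⟨z0, hz0F⟩, ?_⟩
      have hwz : Tendsto (fun n => dist ((s (pZ ⟨z0, hz0F⟩)).1 n) (z0 n) / r n)
          atTop (nhds 0) := (hpZ _ _).1 (hs (pZ ⟨z0, hz0F⟩))
      exact (hpY _ _).2 (aux_transfer hrpos (hψ _) h0 hwz)
  case refine_3 =>
    intro α β
    obtain ⟨L, hL⟩ := hF.2.1 (s α).1 (s α).2 (s β).1 (s β).2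
    have hY : Tendsto (fun n => dist ((ψ (s α)).1 n) ((ψ (s β)).1 n) / r n)
        atTop (nhds L) := aux_transfer hrpos (hψ (s α)) (hψ (s β)) hL
    calc ρY (pY (ψ (s α))) (pY (ψ (s β))) = dtilde r (ψ (s α)).1 (ψ (s β)).1 :=
          hρY _ _
      _ = L := hY.limUnder_eq
      _ = dtilde r (s α).1 (s β).1 := hL.limUnder_eq.symm
      _ = ρZ (pZ (s α)) (pZ (s β)) := (hρZ _ _).symm
      _ = ρZ α β := by rw [hs α, hs β]
end

section
/- Let Y, Z be subspaces of a metric space (X,d) with a ∈ Y ∩ Z, and suppose limsup_{t→0} ε_a(t,Z,Y)/t > 0, where ε_a(t,Z,Y) = sup_{z∈S^Z(a,t)} inf_{y∈Y} d(z,y). Then there exist a normalizing sequence t̃ = {t_n}, a constant c > 0, and a sequence z̃ = {z_n} with z_n ∈ Z and d(a,z_n) = t_n such that limsup_{n→∞} d(z_n,y_n)/t_n ≥ c for every sequence ỹ = {y_n} with y_n ∈ Y; hence Y and Z are not strongly tangent equivalent at a. -/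
open Filter Topology

/-- If `limsup_{t→0} ε_a(t,Z,Y)/t > 0` then there is a normalizing sequence `t̃`, a constant
`c > 0` and a sequence `z̃` in `Z` with `dist a (z n) = t n` such that
`limsup_n d(z_n,y_n)/t_n ≥ c` for every sequence in `Y`; hence `Y` and `Z` are not
strongly tangent equivalent at `a`. -/
theorem stmt_18 {X : Type*} [MetricSpace X] (Y Z : Set X) (a : X)
    (haY : a ∈ Y) (haZ : a ∈ Z)
    (h : ∃ c > (0 : ℝ), ∃ᶠ t in nhdsWithin (0 : ℝ) (Set.Ioi 0),
      c ≤ epsZY Y Z a t / t) :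
    (∃ t : ℕ → ℝ, Normalizing t ∧ ∃ c > (0 : ℝ), ∃ z : ℕ → X,
      InSubspace Z z ∧ (∀ n, dist a (z n) = t n) ∧
      ∀ y : ℕ → X, InSubspace Y y →
        ∃ᶠ n in atTop, c ≤ dist (z n) (y n) / t n) ∧
    ¬ StronglyTangentEquiv Y Z a := by
  obtain ⟨c, hc, hf⟩ := h
  have key : ∀ n : ℕ, ∃ t : ℝ, 0 < t ∧ t < 1/(n+1) ∧ c ≤ epsZY Y Z a t / t := by
    intro n
    have hs : Set.Ioo (0:ℝ) (1/(n+1)) ∈ nhdsWithin (0:ℝ) (Set.Ioi 0) := by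
      apply Ioo_mem_nhdsGT_of_mem
      constructor
      · exact le_refl 0
      · positivity
    obtain ⟨t, h1, h2⟩ := (hf.and_eventually (eventually_of_mem hs fun x hx => hx)).exists
    exact ⟨t, h2.1, h2.2, h1⟩
  choose t ht1 ht2 ht3 using key
  have htend : Tendsto t atTop (nhds 0) := by
    apply squeeze_zero (fun n => (ht1 n).le) (fun n => (ht2 n).le)
    exact tendsto_one_div_add_atTop_nhds_zero_nat
  have hnorm : Normalizing t := ⟨ht1, htend⟩
  have key2 : ∀ n, ∃ z, z ∈ Z ∧ dist a z = t n ∧ ∀ y ∈ Y, c/2 * t n ≤ dist z y := by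
    intro n
    have h1 : c * t n ≤ epsZY Y Z a (t n) := by
      have := ht3 n
      rw [le_div_iff₀ (ht1 n)] at this
      exact this
    have hpos : 0 < c/2 * t n := mul_pos (by linarith) (ht1 n)
    have hlt : c/2 * t n < epsZY Y Z a (t n) := by nlinarith
    have hne : ((fun z => sInf ((fun y => dist z y) '' Y)) '' {z ∈ Z | dist a z = t n}).Nonempty := by
      rcases Set.eq_empty_or_nonempty ((fun z => sInf ((fun y => dist z y) '' Y)) '' {z ∈ Z | dist a z = t n}) with he | hne
      · exfalso
        have : epsZY Y Z a (t n) = 0 := by rw [epsZY, he, Real.sSup_empty]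
        rw [this] at hlt; linarith
      · exact hne
    obtain ⟨m, hm, hmlt⟩ := exists_lt_of_lt_csSup hne hlt
    obtain ⟨z, hz, rfl⟩ := hm
    refine ⟨z, hz.1, hz.2, fun y hy => ?_⟩
    have hle : sInf ((fun y => dist z y) '' Y) ≤ dist z y :=
      csInf_le ⟨0, fun d hd => by obtain ⟨y', _, rfl⟩ := hd; exact dist_nonneg⟩
        ⟨y, hy, rfl⟩
    linarith
  choose z hz1 hz2 hz3 using key2
  have hmain : ∀ y : ℕ → X, InSubspace Y y →
      ∃ᶠ n in atTop, c/2 ≤ dist (z n) (y n) / t n := by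
    intro y hy
    apply Eventually.frequently
    filter_upwards with n
    rw [le_div_iff₀ (ht1 n)]
    exact hz3 n (y n) (hy n)
  refine ⟨⟨t, hnorm, c/2, by linarith, z, hz1, hz2, hmain⟩, ?_⟩
  intro hste
  obtain ⟨y, hyY, hy0⟩ := (hste t hnorm).2 z hz1 ⟨1, by
    have he : (fun n => dist (z n) a / t n) = fun _ => (1:ℝ) :=
      funext fun n => by rw [dist_comm, hz2 n, div_self (ht1 n).ne']
    rw [he]; exact tendsto_const_nhds⟩
  have hev : ∀ᶠ n in atTop, dist (z n) (y n) / t n < c/2 :=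
    hy0.eventually (gt_mem_nhds (by linarith))
  have := (hmain y hyY).and_eventually hev
  obtain ⟨n, h1, h2⟩ := this.exists
  linarith
end
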